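/- arXiv:0812.1165 — 4 statements merged into one kernel-verified Lean document; each statement's English description precedes it below -/
import Mathlib

section
/- For every integer m ≥ 1, the partition function of the hard square model at activity −1 on the cylinder of circumference 2 satisfies Z(C_{m,2}) = (−1)^{⌈m/2⌉}. -/
/-- Adjacency in the cylinder graph: vertices are pairs (row, column) with
rows in {1,…,m} (enforced separately) and columns in ℤ/nℤ.  Two distinct
vertices are adjacent iff they are in the same row and their columns differ
by ±1 in ℤ/nℤ, or they are in the same column and their rows differ by 1. -/
def cylAdj (n : ℕ) (v w : ℕ × ZMod n) : Prop :=
  v ≠ w ∧ ((v.1 = w.1 ∧ (w.2 = v.2 + 1 ∨ v.2 = w.2 + 1)) ∨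
    (v.2 = w.2 ∧ (v.1 + 1 = w.1 ∨ w.1 + 1 = v.1)))

/-- `σ` is an independent set of the cylinder graph `C_{m,n}`:
its vertices lie in {1,…,m} × ℤ/nℤ and no two of them are adjacent. -/
def cylIndep (m n : ℕ) (σ : Finset (ℕ × ZMod n)) : Prop :=
  (∀ v ∈ σ, 1 ≤ v.1 ∧ v.1 ≤ m) ∧ ∀ v ∈ σ, ∀ w ∈ σ, ¬ cylAdj n v w

/-- Partition function of the hard square model at activity −1 on `C_{m,n}`:
`Z(C_{m,n}) = Σ_σ (−1)^{|σ|}` over all independent sets `σ`. -/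
noncomputable def Zcyl (m n : ℕ) : ℤ :=
  ∑ᶠ σ ∈ {σ : Finset (ℕ × ZMod n) | cylIndep m n σ}, (-1 : ℤ) ^ σ.card

instance (n : ℕ) (v w : ℕ × ZMod n) : Decidable (cylAdj n v w) := by
  unfold cylAdj; infer_instance

instance (m n : ℕ) (σ : Finset (ℕ × ZMod n)) : Decidable (cylIndep m n σ) := by
  unfold cylIndep; infer_instance

def Vc (m : ℕ) : Finset (ℕ × ZMod 2) := Finset.Icc 1 m ×ˢ Finset.univ

def Sc (m : ℕ) : Finset (Finset (ℕ × ZMod 2)) := (Vc m).powerset.filter (cylIndep m 2)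

def Zs (m : ℕ) : ℤ := ∑ σ ∈ Sc m, (-1 : ℤ) ^ σ.card

lemma mem_Sc {m : ℕ} {σ : Finset (ℕ × ZMod 2)} : σ ∈ Sc m ↔ cylIndep m 2 σ := by
  simp only [Sc, Finset.mem_filter, Finset.mem_powerset, and_iff_right_iff_imp]
  intro h v hv
  simp only [Vc, Finset.mem_product, Finset.mem_Icc, Finset.mem_univ, and_true]
  exact h.1 v hv

lemma adj_row (r : ℕ) : cylAdj 2 (r, (0 : ZMod 2)) (r, (1 : ZMod 2)) :=
  ⟨by simp, Or.inl ⟨rfl, Or.inl (show (1 : ZMod 2) = 0 + 1 by decide)⟩⟩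

lemma adj_col (r : ℕ) (j : ZMod 2) : cylAdj 2 (r, j) (r + 1, j) :=
  ⟨by simp, Or.inr ⟨rfl, Or.inl rfl⟩⟩

lemma zmod2_cases : ∀ j : ZMod 2, j = 0 ∨ j = 1 := by decide

lemma top_cases {m : ℕ} {σ : Finset (ℕ × ZMod 2)} (h : cylIndep (m + 1) 2 σ)
    {v : ℕ × ZMod 2} (hv : v ∈ σ) (hr : ¬ v.1 ≤ m) :
    v = (m + 1, (0 : ZMod 2)) ∨ v = (m + 1, (1 : ZMod 2)) := by
  have h1 : v.1 = m + 1 := le_antisymm (h.1 v hv).2 (Nat.not_le.mp hr)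
  rcases zmod2_cases v.2 with h2 | h2
  · exact Or.inl (Prod.ext h1 h2)
  · exact Or.inr (Prod.ext h1 h2)

lemma cylIndep_subset {m n : ℕ} {σ τ : Finset (ℕ × ZMod n)} (h : cylIndep m n σ)
    (hsub : τ ⊆ σ) : cylIndep m n τ :=
  ⟨fun v hv => h.1 v (hsub hv), fun v hv w hw => h.2 v (hsub hv) w (hsub hw)⟩

lemma cylIndep_mono {m m' n : ℕ} (hm : m ≤ m') {σ : Finset (ℕ × ZMod n)}
    (h : cylIndep m n σ) : cylIndep m' n σ :=
  ⟨fun v hv => ⟨(h.1 v hv).1, le_trans (h.1 v hv).2 hm⟩, h.2⟩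

/-- sets avoiding the top row of `C_{m+1,2}` are exactly the independent sets of `C_{m,2}` -/
lemma partA (m : ℕ) :
    (Sc (m + 1)).filter
      (fun σ => ¬ ((m+1, (0 : ZMod 2)) ∈ σ) ∧ ¬ ((m+1, (1 : ZMod 2)) ∈ σ)) = Sc m := by
  ext σ
  simp only [Finset.mem_filter, mem_Sc]
  constructor
  · rintro ⟨h, h0, h1⟩
    refine ⟨fun v hv => ⟨(h.1 v hv).1, ?_⟩, h.2⟩
    by_contra hr
    rcases top_cases h hv hr with rfl | rfl
    · exact h0 hv
    · exact h1 hv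
  · intro h
    refine ⟨cylIndep_mono (by omega) h, fun h0 => ?_, fun h1 => ?_⟩
    · exact absurd (h.1 _ h0).2 (by omega)
    · exact absurd (h.1 _ h1).2 (by omega)

/-- a top-row vertex `(k+2, j)` is not adjacent to any vertex `w` with row ≤ k+1,
except `(k+1, j)`. -/
lemma not_adj_top {k : ℕ} {j : ZMod 2} {w : ℕ × ZMod 2} (hw1 : w.1 ≤ k + 1)
    (hwne : w ≠ (k + 1, j)) :
    ¬ cylAdj 2 (k + 2, j) w ∧ ¬ cylAdj 2 w (k + 2, j) := by
  obtain ⟨w1, w2⟩ := w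
  simp only at hw1
  constructor
  · rintro ⟨-, ⟨h1, -⟩ | ⟨h2, h3 | h3⟩⟩
    · simp only at h1; omega
    · simp only at h3; omega
    · simp only at h2 h3
      exact hwne (Prod.ext (by omega) h2.symm)
  · rintro ⟨-, ⟨h1, -⟩ | ⟨h2, h3 | h3⟩⟩
    · simp only at h1; omega
    · simp only at h2 h3
      exact hwne (Prod.ext (by omega) h2)
    · simp only at h3; omega

lemma partB (k : ℕ) (j : ZMod 2) :
    ∑ σ ∈ (Sc (k+2)).filter (fun σ => (k+2, j) ∈ σ), (-1:ℤ)^σ.card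
    = - ∑ τ ∈ (Sc (k+1)).filter (fun τ => (k+1, j) ∉ τ), (-1:ℤ)^τ.card := by
  rw [← Finset.sum_neg_distrib]
  refine Finset.sum_nbij' (fun σ => σ.erase (k+2, j)) (fun τ => insert (k+2, j) τ)
    ?_ ?_ ?_ ?_ ?_
  · -- erase maps into RHS
    intro σ hσ
    rw [Finset.mem_filter, mem_Sc] at hσ
    obtain ⟨h, ha⟩ := hσ
    rw [Finset.mem_filter, mem_Sc]
    have hsub : σ.erase (k+2, j) ⊆ σ := Finset.erase_subset _ _
    refine ⟨⟨fun v hv => ⟨(h.1 v (hsub hv)).1, ?_⟩,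
      (cylIndep_subset h hsub).2⟩, fun hb => ?_⟩
    · -- row bound ≤ k+1
      by_contra hr
      have hvne := Finset.ne_of_mem_erase hv
      rcases top_cases h (hsub hv) hr with hv01 | hv01
      · -- v = (k+2, 0)
        rcases zmod2_cases j with rfl | rfl
        · exact hvne (by rw [hv01])
        · exact h.2 _ (hsub hv) _ ha (by rw [hv01]; exact adj_row (k+2))
      · rcases zmod2_cases j with rfl | rfl
        · exact h.2 _ ha _ (hsub hv) (by rw [hv01]; exact adj_row (k+2))
        · exact hvne (by rw [hv01])
    · -- (k+1, j) ∉ erased set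
      exact h.2 _ (hsub hb) _ ha (adj_col (k+1) j)
  · -- insert maps into LHS
    intro τ hτ
    rw [Finset.mem_filter, mem_Sc] at hτ
    obtain ⟨h, hb⟩ := hτ
    rw [Finset.mem_filter, mem_Sc]
    refine ⟨⟨fun v hv => ?_, fun v hv w hw => ?_⟩, Finset.mem_insert_self _ _⟩
    · rcases Finset.mem_insert.mp hv with rfl | hv
      · exact ⟨by omega, le_refl _⟩
      · exact ⟨(h.1 v hv).1, by have := (h.1 v hv).2; omega⟩
    · rcases Finset.mem_insert.mp hv with rfl | hv <;>
        rcases Finset.mem_insert.mp hw with rfl | hw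
      · exact fun hadj => hadj.1 rfl
      · exact (not_adj_top (h.1 w hw).2 (fun he => hb (he ▸ hw))).1
      · exact (not_adj_top (h.1 v hv).2 (fun he => hb (he ▸ hv))).2
      · exact h.2 v hv w hw
  · -- left inverse
    intro σ hσ
    rw [Finset.mem_filter] at hσ
    exact Finset.insert_erase hσ.2
  · -- right inverse
    intro τ hτ
    rw [Finset.mem_filter, mem_Sc] at hτ
    refine Finset.erase_insert (fun hmem => ?_)
    have := (hτ.1.1 _ hmem).2
    omega
  · -- summand compatibility
    intro σ hσ
    rw [Finset.mem_filter] at hσ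
    have hcard : σ.card = (σ.erase (k+2, j)).card + 1 := by
      rw [Finset.card_erase_of_mem hσ.2]
      have : 1 ≤ σ.card := Finset.card_pos.mpr ⟨_, hσ.2⟩
      omega
    rw [hcard, pow_succ]
    ring

lemma partW (k : ℕ) :
    (∑ τ ∈ (Sc (k+1)).filter (fun τ => (k+1, (0:ZMod 2)) ∉ τ), (-1:ℤ)^τ.card)
    + (∑ τ ∈ (Sc (k+1)).filter (fun τ => (k+1, (1:ZMod 2)) ∉ τ), (-1:ℤ)^τ.card)
    = Zs (k+1) + Zs k := by
  rw [Finset.sum_filter, Finset.sum_filter, ← Finset.sum_add_distrib]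
  have key : ∀ τ ∈ Sc (k+1),
      ((if (k+1, (0:ZMod 2)) ∉ τ then (-1:ℤ)^τ.card else 0)
        + (if (k+1, (1:ZMod 2)) ∉ τ then (-1:ℤ)^τ.card else 0))
      = (-1:ℤ)^τ.card
        + (if ¬((k+1, (0:ZMod 2)) ∈ τ) ∧ ¬((k+1, (1:ZMod 2)) ∈ τ)
            then (-1:ℤ)^τ.card else 0) := by
    intro τ hτ
    rw [mem_Sc] at hτ
    by_cases h0 : (k+1, (0:ZMod 2)) ∈ τ <;> by_cases h1 : (k+1, (1:ZMod 2)) ∈ τ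
    · exact absurd (adj_row (k+1)) (hτ.2 _ h0 _ h1)
    · simp [h0, h1]
    · simp [h0, h1]
    · simp [h0, h1]
  rw [Finset.sum_congr rfl key, Finset.sum_add_distrib, ← Finset.sum_filter, partA]
  rfl

lemma filter_top_mem (k : ℕ) :
    (Sc (k+2)).filter
        (fun σ => ¬((k+2, (0:ZMod 2)) ∈ σ) ∧ (k+2, (1:ZMod 2)) ∈ σ)
      = (Sc (k+2)).filter (fun σ => (k+2, (1:ZMod 2)) ∈ σ) := by
  ext σ
  simp only [Finset.mem_filter, mem_Sc, and_congr_right_iff]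
  intro h
  constructor
  · exact fun hh => hh.2
  · intro h1
    exact ⟨fun h0 => h.2 _ h0 _ h1 (adj_row (k+2)), h1⟩

lemma Zs_rec (k : ℕ) : Zs (k + 2) = - Zs k := by
  have split1 := Finset.sum_filter_add_sum_filter_not (Sc (k+2))
    (fun σ => (k+2, (0:ZMod 2)) ∈ σ) (fun σ => (-1:ℤ)^σ.card)
  have split2 := Finset.sum_filter_add_sum_filter_not
    ((Sc (k+2)).filter (fun σ => ¬((k+2, (0:ZMod 2)) ∈ σ)))
    (fun σ => (k+2, (1:ZMod 2)) ∈ σ) (fun σ => (-1:ℤ)^σ.card)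
  rw [Finset.filter_filter, Finset.filter_filter] at split2
  have e1 : (Sc (k+2)).filter
      (fun σ => ¬((k+2, (0:ZMod 2)) ∈ σ) ∧ (k+2, (1:ZMod 2)) ∈ σ)
      = (Sc (k+2)).filter (fun σ => (k+2, (1:ZMod 2)) ∈ σ) := filter_top_mem k
  have e2 := partA (k+1)
  have b0 := partB k 0
  have b1 := partB k 1
  have w := partW k
  have hZ : Zs (k+2) = ∑ σ ∈ Sc (k+2), (-1:ℤ)^σ.card := rfl
  rw [hZ, ← split1, ← split2, e1, e2, b0, b1]
  show - _ + (- _ + Zs (k+1)) = - Zs k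
  linarith [w]

lemma Zs_val : ∀ m, 1 ≤ m → Zs m = (-1 : ℤ) ^ ((m + 1) / 2) := by
  intro m
  induction m using Nat.strong_induction_on with
  | _ m ih =>
    match m with
    | 0 => intro h; exact absurd h (by omega)
    | 1 => intro _; decide
    | 2 => intro _; decide
    | (k+3) =>
      intro _
      have hk : 1 ≤ k + 1 := by omega
      have := ih (k+1) (by omega) hk
      rw [Zs_rec (k+1), this]
      have : (k + 3 + 1) / 2 = (k + 1 + 1) / 2 + 1 := by omega
      rw [this, pow_succ]
      ring


lemma Zcyl_eq (m : ℕ) : Zcyl m 2 = Zs m := by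
  unfold Zcyl Zs
  rw [← finsum_mem_coe_finset]
  congr 1
  ext σ
  simp [mem_Sc]

/-- For every integer `m ≥ 1`, `Z(C_{m,2}) = (−1)^{⌈m/2⌉}`. -/
theorem Zcyl_two (m : ℕ) (hm : 1 ≤ m) :
    Zcyl m 2 = (-1 : ℤ) ^ ((m + 1) / 2) := by
  rw [Zcyl_eq, Zs_val m hm]
end

section
/- For every integer m ≥ 1, the partition function of the hard square model at activity −1 on the cylinder of circumference 4 satisfies Z(C_{m,4}) = m + 1 if m is even and Z(C_{m,4}) = −m if m is odd. -/
open Finset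


/-! ### Auxiliary development -/

def hIndep (t : Finset (ZMod 4)) : Prop := ∀ j ∈ t, j + 1 ∉ t

instance : DecidablePred hIndep := fun t => by unfold hIndep; infer_instance

def wt (t : Finset (ZMod 4)) : ℤ := if hIndep t then (-1) ^ t.card else 0

noncomputable def indepSets (m : ℕ) : Finset (Finset (ℕ × ZMod 4)) :=
  @Finset.filter _ (cylIndep m 4) (Classical.decPred _)
    ((Finset.Icc 1 m ×ˢ (Finset.univ : Finset (ZMod 4))).powerset)

lemma mem_indepSets {m : ℕ} {σ : Finset (ℕ × ZMod 4)} : σ ∈ indepSets m ↔ cylIndep m 4 σ := by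
  unfold indepSets
  rw [@Finset.mem_filter _ _ (Classical.decPred _)]
  constructor
  · intro h; exact h.2
  · intro h
    refine ⟨Finset.mem_powerset.2 fun v hv => ?_, h⟩
    exact Finset.mem_product.2 ⟨Finset.mem_Icc.2 ⟨(h.1 v hv).1, (h.1 v hv).2⟩, Finset.mem_univ _⟩

def rowOf (σ : Finset (ℕ × ZMod 4)) (i : ℕ) : Finset (ZMod 4) :=
  (σ.filter (fun v => v.1 = i)).image Prod.snd

lemma mem_rowOf {σ : Finset (ℕ × ZMod 4)} {i : ℕ} {j : ZMod 4} :
    j ∈ rowOf σ i ↔ (i, j) ∈ σ := by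
  unfold rowOf
  simp only [Finset.mem_image, Finset.mem_filter]
  constructor
  · rintro ⟨⟨a, b⟩, ⟨hmem, ha⟩, hb⟩
    simp only at ha hb; subst ha; subst hb; exact hmem
  · intro h; exact ⟨(i, j), ⟨h, rfl⟩, rfl⟩

lemma rowOf_hIndep {m : ℕ} {σ : Finset (ℕ × ZMod 4)} (h : cylIndep m 4 σ) (i : ℕ) :
    hIndep (rowOf σ i) := by
  intro j hj hj1
  rw [mem_rowOf] at hj hj1
  refine h.2 _ hj _ hj1 ⟨?_, Or.inl ⟨rfl, Or.inl rfl⟩⟩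
  intro he
  have : j = j + 1 := congrArg Prod.snd he
  have : (1 : ZMod 4) = 0 := by
    have := left_eq_add.mp this
    exact this
  exact absurd this (by decide)

noncomputable def N (m : ℕ) (t : Finset (ZMod 4)) : ℤ :=
  ∑ σ ∈ indepSets m, if rowOf σ m = t then (-1 : ℤ) ^ σ.card else 0

lemma N_not_hIndep (m : ℕ) (t : Finset (ZMod 4)) (ht : ¬ hIndep t) : N m t = 0 := by
  refine Finset.sum_eq_zero fun σ hσ => if_neg fun he => ?_
  exact ht (he ▸ rowOf_hIndep (mem_indepSets.1 hσ) m)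

lemma sum16 (g : Finset (ZMod 4) → ℤ) : ∑ s, g s = g ∅ + g {0} + g {1} + g {2} + g {3} + g {0,1} + g {0,2} + g {0,3} + g {1,2} + g {1,3} + g {2,3} + g {0,1,2} + g {0,1,3} + g {0,2,3} + g {1,2,3} + g {0,1,2,3} := by
  rw [show (univ : Finset (Finset (ZMod 4))) = {∅, {0}, {1}, {2}, {3}, {0,1}, {0,2}, {0,3}, {1,2}, {1,3}, {2,3}, {0,1,2}, {0,1,3}, {0,2,3}, {1,2,3}, {0,1,2,3}} from by decide]
  simp (config := { decide := true }) [Finset.sum_insert, Finset.mem_insert]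
  ring

/-! ### The row-peeling bijection -/

lemma filter_indep {m : ℕ} {σ : Finset (ℕ × ZMod 4)} (h : cylIndep (m+1) 4 σ) :
    cylIndep m 4 (σ.filter (fun v => v.1 ≠ m+1)) := by
  constructor
  · intro v hv
    rw [Finset.mem_filter] at hv
    have := h.1 v hv.1
    have h2 := hv.2
    omega
  · intro v hv w hw
    exact h.2 v (Finset.mem_filter.1 hv).1 w (Finset.mem_filter.1 hw).1

lemma mem_timg {m : ℕ} {t : Finset (ZMod 4)} {u : ℕ × ZMod 4} :
    u ∈ t.image (fun x => ((m+1 : ℕ), x)) ↔ u.1 = m+1 ∧ u.2 ∈ t := by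
  simp only [Finset.mem_image]
  constructor
  · rintro ⟨x, hx, rfl⟩; exact ⟨rfl, hx⟩
  · rintro ⟨h1, h2⟩
    exact ⟨u.2, h2, by rw [← h1]⟩

lemma union_indep {m : ℕ} {σ' : Finset (ℕ × ZMod 4)} {t : Finset (ZMod 4)}
    (h : cylIndep m 4 σ') (ht : hIndep t) (hd : Disjoint t (rowOf σ' m)) :
    cylIndep (m+1) 4 (σ' ∪ t.image (fun x => ((m+1 : ℕ), x))) := by
  have key : ∀ v ∈ σ', ∀ w ∈ t.image (fun x => ((m+1 : ℕ), x)), ¬ cylAdj 4 v w := by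
    intro v hv w hw ⟨hne, hor⟩
    obtain ⟨hw1, hw2⟩ := mem_timg.1 hw
    have hv1 := h.1 v hv
    rcases hor with ⟨he, _⟩ | ⟨he, hr | hr⟩
    · omega
    · -- v.1 + 1 = w.1 = m+1, so v.1 = m, and v.2 = w.2 ∈ t
      have hvm : v.1 = m := by omega
      have : v.2 ∈ rowOf σ' m := mem_rowOf.2 (by rw [← hvm]; exact hv)
      exact Finset.disjoint_left.1 hd (he ▸ hw2) this
    · omega
  constructor
  · intro v hv
    rw [Finset.mem_union] at hv
    rcases hv with hv | hv
    · have := h.1 v hv; omega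
    · have := (mem_timg.1 hv).1; omega
  · intro v hv w hw hadj
    rw [Finset.mem_union] at hv hw
    rcases hv with hv | hv <;> rcases hw with hw | hw
    · exact h.2 v hv w hw hadj
    · exact key v hv w hw hadj
    · refine key w hw v hv ⟨Ne.symm hadj.1, ?_⟩
      rcases hadj.2 with ⟨he, h1 | h1⟩ | ⟨he, h1 | h1⟩
      · exact Or.inl ⟨he.symm, Or.inr h1⟩
      · exact Or.inl ⟨he.symm, Or.inl h1⟩
      · exact Or.inr ⟨he.symm, Or.inr h1⟩
      · exact Or.inr ⟨he.symm, Or.inl h1⟩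
    · obtain ⟨hv1, hv2⟩ := mem_timg.1 hv
      obtain ⟨hw1, hw2⟩ := mem_timg.1 hw
      obtain ⟨hne, hor⟩ := hadj
      rcases hor with ⟨_, h1 | h1⟩ | ⟨he, h1 | h1⟩
      · exact ht v.2 hv2 (h1 ▸ hw2)
      · exact ht w.2 hw2 (h1 ▸ hv2)
      · omega
      · omega

lemma rowOf_union {m : ℕ} {σ' : Finset (ℕ × ZMod 4)} {t : Finset (ZMod 4)}
    (h : cylIndep m 4 σ') :
    rowOf (σ' ∪ t.image (fun x => ((m+1 : ℕ), x))) (m+1) = t := by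
  ext j
  rw [mem_rowOf, Finset.mem_union]
  constructor
  · rintro (hj | hj)
    · have := (h.1 _ hj).2; omega
    · exact (mem_timg.1 hj).2
  · intro hj
    exact Or.inr (mem_timg.2 ⟨rfl, hj⟩)

lemma left_inv_lemma {m : ℕ} {σ : Finset (ℕ × ZMod 4)}
    (hrow : rowOf σ (m+1) = t) :
    σ.filter (fun v => v.1 ≠ m+1) ∪ t.image (fun x => ((m+1 : ℕ), x)) = σ := by
  have himg : t.image (fun x => ((m+1 : ℕ), x)) = σ.filter (fun v => v.1 = m+1) := by
    ext ⟨a, b⟩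
    rw [mem_timg, Finset.mem_filter]
    simp only
    constructor
    · rintro ⟨rfl, hb⟩
      exact ⟨mem_rowOf.1 (hrow ▸ hb), rfl⟩
    · rintro ⟨hab, rfl⟩
      exact ⟨rfl, hrow ▸ mem_rowOf.2 hab⟩
  rw [himg, Finset.union_comm, Finset.filter_union_filter_not_eq]

lemma right_inv_lemma {m : ℕ} {σ' : Finset (ℕ × ZMod 4)} {t : Finset (ZMod 4)}
    (h : cylIndep m 4 σ') :
    (σ' ∪ t.image (fun x => ((m+1 : ℕ), x))).filter (fun v => v.1 ≠ m+1) = σ' := by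
  ext v
  rw [Finset.mem_filter, Finset.mem_union]
  constructor
  · rintro ⟨hv | hv, hne⟩
    · exact hv
    · exact absurd (mem_timg.1 hv).1 hne
  · intro hv
    have := (h.1 v hv).2
    exact ⟨Or.inl hv, by omega⟩

lemma N_step (m : ℕ) (t : Finset (ZMod 4)) :
    N (m+1) t = wt t * ∑ s : Finset (ZMod 4), if Disjoint t s then N m s else 0 := by
  have hinner : (∑ s : Finset (ZMod 4), if Disjoint t s then N m s else 0)
      = ∑ σ ∈ indepSets m, if Disjoint t (rowOf σ m) then (-1 : ℤ) ^ σ.card else 0 := by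
    calc (∑ s : Finset (ZMod 4), if Disjoint t s then N m s else 0)
        = ∑ s ∈ univ, ∑ σ ∈ indepSets m,
            (if Disjoint t s then (if rowOf σ m = s then (-1 : ℤ) ^ σ.card else 0) else 0) := by
          refine Finset.sum_congr rfl fun s _ => ?_
          unfold N
          split_ifs with h
          · rfl
          · exact Finset.sum_const_zero.symm
      _ = ∑ σ ∈ indepSets m, ∑ s ∈ univ,
            (if Disjoint t s then (if rowOf σ m = s then (-1 : ℤ) ^ σ.card else 0) else 0) :=
          Finset.sum_comm
      _ = ∑ σ ∈ indepSets m, if Disjoint t (rowOf σ m) then (-1 : ℤ) ^ σ.card else 0 := by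
          refine Finset.sum_congr rfl fun σ _ => ?_
          rw [show (∑ s ∈ univ, (if Disjoint t s then (if rowOf σ m = s then (-1 : ℤ) ^ σ.card else 0) else 0))
              = ∑ s ∈ univ, (if rowOf σ m = s then (if Disjoint t s then (-1 : ℤ) ^ σ.card else 0) else 0) from
            Finset.sum_congr rfl fun s _ => by split_ifs <;> rfl]
          rw [Finset.sum_ite_eq univ (rowOf σ m)]
          simp
  rw [hinner]
  by_cases ht : hIndep t
  · rw [wt, if_pos ht]
    unfold N
    rw [← Finset.sum_filter, ← Finset.sum_filter, Finset.mul_sum]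
    refine Finset.sum_nbij' (i := fun σ => σ.filter (fun v => v.1 ≠ m+1))
      (j := fun σ' => σ' ∪ t.image (fun x => ((m+1 : ℕ), x))) ?_ ?_ ?_ ?_ ?_
    · -- hi
      intro σ hσ
      rw [Finset.mem_filter] at hσ ⊢
      obtain ⟨hσ1, hrow⟩ := hσ
      have hind := mem_indepSets.1 hσ1
      refine ⟨mem_indepSets.2 (filter_indep hind), ?_⟩
      rw [Finset.disjoint_left]
      intro j hjt hjrow
      have h1 : ((m : ℕ), j) ∈ σ := by
        have := mem_rowOf.1 hjrow
        exact (Finset.mem_filter.1 this).1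
      have h2 : ((m+1 : ℕ), j) ∈ σ := mem_rowOf.1 (hrow ▸ hjt)
      refine hind.2 _ h1 _ h2 ⟨?_, Or.inr ⟨rfl, Or.inl rfl⟩⟩
      intro he
      have : m = m + 1 := congrArg Prod.fst he
      omega
    · -- hj
      intro σ' hσ'
      rw [Finset.mem_filter] at hσ' ⊢
      obtain ⟨hσ1, hd⟩ := hσ'
      have hind := mem_indepSets.1 hσ1
      exact ⟨mem_indepSets.2 (union_indep hind ht hd), rowOf_union hind⟩
    · -- left inverse
      intro σ hσ
      rw [Finset.mem_filter] at hσ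
      exact left_inv_lemma hσ.2
    · -- right inverse
      intro σ' hσ'
      rw [Finset.mem_filter] at hσ'
      exact right_inv_lemma (mem_indepSets.1 hσ'.1)
    · -- weights
      intro σ hσ
      rw [Finset.mem_filter] at hσ
      have hcard : σ.card = t.card + (σ.filter (fun v => v.1 ≠ m+1)).card := by
        conv_lhs => rw [← left_inv_lemma hσ.2]
        rw [Finset.union_comm, Finset.card_union_of_disjoint, Finset.card_image_of_injective,
          add_comm]
        · intro a b hab
          exact congrArg Prod.snd hab
        · rw [Finset.disjoint_left]
          intro v hv hv2
          exact (Finset.mem_filter.1 hv2).2 (mem_timg.1 hv).1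
      rw [hcard, pow_add]
  · rw [wt, if_neg ht, zero_mul]
    refine Finset.sum_eq_zero fun σ hσ => if_neg fun he => ?_
    exact ht (he ▸ rowOf_hIndep (mem_indepSets.1 hσ) (m+1))

lemma indepSets_zero : indepSets 0 = {∅} := by
  ext σ
  rw [mem_indepSets, Finset.mem_singleton]
  constructor
  · intro h
    rw [Finset.eq_empty_iff_forall_notMem]
    intro v hv
    have := h.1 v hv
    omega
  · rintro rfl
    exact ⟨fun v hv => absurd hv (Finset.notMem_empty v), fun v hv => absurd hv (Finset.notMem_empty v)⟩

lemma rowOf_empty (i : ℕ) : rowOf ∅ i = ∅ := by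
  unfold rowOf
  simp

lemma N_zero (t : Finset (ZMod 4)) : N 0 t = if t = ∅ then 1 else 0 := by
  unfold N
  rw [indepSets_zero, Finset.sum_singleton, rowOf_empty, Finset.card_empty, pow_zero]
  by_cases h : t = ∅
  · rw [if_pos h.symm, if_pos h]
  · rw [if_neg fun he => h he.symm, if_neg h]

lemma step_eval (m : ℕ) (X Y Z : ℤ)
    (h0 : N m ∅ = X) (h1 : ∀ a, N m {a} = Y) (h2 : N m {0,2} = Z) (h3 : N m {1,3} = Z)
    (hz : ∀ t, ¬ hIndep t → N m t = 0) :
    N (m+1) ∅ = X + 4*Y + 2*Z ∧ (∀ a : ZMod 4, N (m+1) {a} = -(X + 3*Y + Z)) ∧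
    N (m+1) {0,2} = X + 2*Y + Z ∧ N (m+1) {1,3} = X + 2*Y + Z := by
  refine ⟨?_, ?_, ?_, ?_⟩
  · rw [N_step, show wt ∅ = 1 from by decide, sum16,
      hz {0,1} (by decide), hz {0,3} (by decide), hz {1,2} (by decide), hz {2,3} (by decide),
      hz {0,1,2} (by decide), hz {0,1,3} (by decide), hz {0,2,3} (by decide), hz {1,2,3} (by decide),
      hz {0,1,2,3} (by decide), h0, h1 0, h1 1, h1 2, h1 3, h2, h3]
    simp (config := { decide := true }) only [if_true, if_false, ite_self]
    ring
  · intro a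
    fin_cases a <;>
    · rw [N_step, show wt _ = -1 from by decide, sum16,
        hz {0,1} (by decide), hz {0,3} (by decide), hz {1,2} (by decide), hz {2,3} (by decide),
        hz {0,1,2} (by decide), hz {0,1,3} (by decide), hz {0,2,3} (by decide), hz {1,2,3} (by decide),
        hz {0,1,2,3} (by decide), h0, h1 0, h1 1, h1 2, h1 3, h2, h3]
      simp (config := { decide := true }) only [if_true, if_false, ite_self]
      ring
  · rw [N_step, show wt {0,2} = 1 from by decide, sum16,
      hz {0,1} (by decide), hz {0,3} (by decide), hz {1,2} (by decide), hz {2,3} (by decide),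
      hz {0,1,2} (by decide), hz {0,1,3} (by decide), hz {0,2,3} (by decide), hz {1,2,3} (by decide),
      hz {0,1,2,3} (by decide), h0, h1 0, h1 1, h1 2, h1 3, h2, h3]
    simp (config := { decide := true }) only [if_true, if_false, ite_self]
    ring
  · rw [N_step, show wt {1,3} = 1 from by decide, sum16,
      hz {0,1} (by decide), hz {0,3} (by decide), hz {1,2} (by decide), hz {2,3} (by decide),
      hz {0,1,2} (by decide), hz {0,1,3} (by decide), hz {0,2,3} (by decide), hz {1,2,3} (by decide),
      hz {0,1,2,3} (by decide), h0, h1 0, h1 1, h1 2, h1 3, h2, h3]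
    simp (config := { decide := true }) only [if_true, if_false, ite_self]
    ring

lemma N_vals (k : ℕ) :
    (N (2*k+1) ∅ = 2*(k:ℤ)+1 ∧ (∀ a : ZMod 4, N (2*k+1) {a} = -((k:ℤ)+1)) ∧
      N (2*k+1) {0,2} = 1 ∧ N (2*k+1) {1,3} = 1)
    ∧ (N (2*k+2) ∅ = -(2*(k:ℤ)+1) ∧ (∀ a : ZMod 4, N (2*k+2) {a} = (k:ℤ)+1) ∧
      N (2*k+2) {0,2} = 0 ∧ N (2*k+2) {1,3} = 0) := by
  induction k with
  | zero =>
    have h0 : N 0 ∅ = 1 := by rw [N_zero]; simp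
    have h1 : ∀ a : ZMod 4, N 0 {a} = 0 := fun a => by
      rw [N_zero, if_neg (Finset.singleton_ne_empty a)]
    have h2 : N 0 {0,2} = 0 := by rw [N_zero]; simp
    have h3 : N 0 {1,3} = 0 := by rw [N_zero]; simp
    obtain ⟨e0, e1, e2, e3⟩ := step_eval 0 1 0 0 h0 h1 h2 h3 (fun t ht => N_not_hIndep 0 t ht)
    norm_num at e0 e1 e2 e3
    obtain ⟨f0, f1, f2, f3⟩ := step_eval 1 1 (-1) 1 e0 e1 e2 e3 (fun t ht => N_not_hIndep 1 t ht)
    norm_num at f0 f1 f2 f3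
    refine ⟨⟨?_, ?_, ?_, ?_⟩, ⟨?_, ?_, ?_, ?_⟩⟩ <;> norm_num [e0, e1, e2, e3, f0, f1, f2, f3]
  | succ k ih =>
    obtain ⟨_, h0, h1, h2, h3⟩ := ih
    obtain ⟨e0, e1, e2, e3⟩ := step_eval (2*k+2) _ _ _ h0 h1 h2 h3
      (fun t ht => N_not_hIndep _ t ht)
    have idx1 : 2*(k+1)+1 = (2*k+2)+1 := by ring
    have e0' : N (2*(k+1)+1) ∅ = 2*((k:ℤ)+1)+1 := by rw [idx1, e0]; ring
    have e1' : ∀ a : ZMod 4, N (2*(k+1)+1) {a} = -(((k:ℤ)+1)+1) := fun a => by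
      rw [idx1, e1 a]; ring
    have e2' : N (2*(k+1)+1) {0,2} = 1 := by rw [idx1, e2]; ring
    have e3' : N (2*(k+1)+1) {1,3} = 1 := by rw [idx1, e3]; ring
    obtain ⟨f0, f1, f2, f3⟩ := step_eval (2*(k+1)+1) _ _ _ e0' e1' e2' e3'
      (fun t ht => N_not_hIndep _ t ht)
    have idx2 : 2*(k+1)+2 = (2*(k+1)+1)+1 := by ring
    refine ⟨⟨?_, ?_, ?_, ?_⟩, ⟨?_, ?_, ?_, ?_⟩⟩
    · push_cast [e0']; ring
    · intro a; push_cast [e1' a]; ring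
    · exact e2'
    · exact e3'
    · rw [idx2, f0]; push_cast; ring
    · intro a; rw [idx2, f1 a]; push_cast; ring
    · rw [idx2, f2]; ring
    · rw [idx2, f3]; ring

lemma Z_eq (m : ℕ) : Zcyl m 4 = ∑ t : Finset (ZMod 4), N m t := by
  have hset : {σ : Finset (ℕ × ZMod 4) | cylIndep m 4 σ} = ↑(indepSets m) := by
    ext σ; simp [mem_indepSets]
  rw [Zcyl, hset, finsum_mem_coe_finset]
  unfold N
  rw [Finset.sum_comm]
  refine Finset.sum_congr rfl fun σ _ => ?_
  rw [Finset.sum_ite_eq univ (rowOf σ m) (fun _ => (-1:ℤ)^σ.card), if_pos (Finset.mem_univ _)]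

lemma Z_odd (k : ℕ) : Zcyl (2*k+1) 4 = -(2*(k:ℤ)+1) := by
  obtain ⟨⟨h0, h1, h2, h3⟩, _⟩ := N_vals k
  rw [Z_eq, sum16, h0, h1 0, h1 1, h1 2, h1 3, h2, h3,
    N_not_hIndep _ {0,1} (by decide), N_not_hIndep _ {0,3} (by decide),
    N_not_hIndep _ {1,2} (by decide), N_not_hIndep _ {2,3} (by decide),
    N_not_hIndep _ {0,1,2} (by decide), N_not_hIndep _ {0,1,3} (by decide),
    N_not_hIndep _ {0,2,3} (by decide), N_not_hIndep _ {1,2,3} (by decide),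
    N_not_hIndep _ {0,1,2,3} (by decide)]
  ring

lemma Z_even (k : ℕ) : Zcyl (2*k+2) 4 = 2*(k:ℤ)+3 := by
  obtain ⟨_, h0, h1, h2, h3⟩ := N_vals k
  rw [Z_eq, sum16, h0, h1 0, h1 1, h1 2, h1 3, h2, h3,
    N_not_hIndep _ {0,1} (by decide), N_not_hIndep _ {0,3} (by decide),
    N_not_hIndep _ {1,2} (by decide), N_not_hIndep _ {2,3} (by decide),
    N_not_hIndep _ {0,1,2} (by decide), N_not_hIndep _ {0,1,3} (by decide),
    N_not_hIndep _ {0,2,3} (by decide), N_not_hIndep _ {1,2,3} (by decide),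
    N_not_hIndep _ {0,1,2,3} (by decide)]
  ring


/-- For every integer `m ≥ 1`, `Z(C_{m,4}) = m + 1` if `m` is even
and `Z(C_{m,4}) = −m` if `m` is odd. -/
theorem Zcyl_four (m : ℕ) (hm : 1 ≤ m) :
    (Even m → Zcyl m 4 = (m : ℤ) + 1) ∧
    (Odd m → Zcyl m 4 = -(m : ℤ)) := by

  constructor
  · intro he
    obtain ⟨r, hr⟩ := he
    have hr1 : 1 ≤ r := by omega
    have hm2 : m = 2*(r-1)+2 := by omega
    rw [hm2, Z_even (r-1)]
    have : ((r:ℤ) - 1) = ((r-1 : ℕ) : ℤ) := by omega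
    push_cast [← this]
    ring
  · intro ho
    obtain ⟨r, hr⟩ := ho
    subst hr
    rw [Z_odd r]
    push_cast
    ring
end

section
/- For every integer m ≥ 1, the partition function of the hard square model at activity −1 on the cylinder of circumference 5 satisfies Z(C_{m,5}) = 1. -/
open Finset

instance cylAdj.dec (n : ℕ) (v w : ℕ × ZMod n) : Decidable (cylAdj n v w) := by
  unfold cylAdj; infer_instance

instance cylIndep.dec (m n : ℕ) (σ : Finset (ℕ × ZMod n)) : Decidable (cylIndep m n σ) := by
  unfold cylIndep; infer_instance

lemma cylAdj_symm {n : ℕ} {v w : ℕ × ZMod n} (h : cylAdj n v w) : cylAdj n w v := by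
  obtain ⟨h1, h2⟩ := h
  refine ⟨h1.symm, ?_⟩
  rcases h2 with ⟨ha, hb⟩ | ⟨ha, hb⟩
  · exact Or.inl ⟨ha.symm, hb.symm⟩
  · exact Or.inr ⟨ha.symm, hb.symm⟩

/-- Independent subsets of the cycle ℤ/5ℤ. -/
def indep5 (t : Finset (ZMod 5)) : Prop := ∀ j ∈ t, j + 1 ∉ t

instance : DecidablePred indep5 := fun t => by unfold indep5; infer_instance

/-- The finite collection of independent sets of `C_{m,5}`. -/
def cylSets (m : ℕ) : Finset (Finset (ℕ × ZMod 5)) :=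
  ((Finset.Icc 1 m) ×ˢ (univ : Finset (ZMod 5))).powerset.filter (fun σ => cylIndep m 5 σ)

/-- The set of columns occupied in row `i`. -/
def row (i : ℕ) (σ : Finset (ℕ × ZMod 5)) : Finset (ZMod 5) :=
  (σ.filter (fun v => v.1 = i)).image Prod.snd

/-- Partial partition function, graded by the contents of the top row. -/
def G (m : ℕ) (t : Finset (ZMod 5)) : ℤ :=
  ∑ σ ∈ (cylSets m).filter (fun σ => row m σ = t), (-1 : ℤ) ^ σ.card

/-- Transfer operator. -/
def stepF (v : Finset (ZMod 5) → ℤ) (t : Finset (ZMod 5)) : ℤ :=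
  if indep5 t then (-1 : ℤ) ^ t.card * ∑ s : Finset (ZMod 5), (if Disjoint s t then v s else 0)
  else 0

def initF (t : Finset (ZMod 5)) : ℤ := if indep5 t then (-1 : ℤ) ^ t.card else 0

lemma mem_row {i : ℕ} {c : ZMod 5} {σ : Finset (ℕ × ZMod 5)} :
    c ∈ row i σ ↔ (i, c) ∈ σ := by
  simp only [row, Finset.mem_image, Finset.mem_filter]
  constructor
  · rintro ⟨⟨a, b⟩, ⟨hσ, rfl⟩, rfl⟩; exact hσ
  · intro h; exact ⟨(i, c), ⟨h, rfl⟩, rfl⟩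

lemma mem_cylSets {m : ℕ} {σ : Finset (ℕ × ZMod 5)} :
    σ ∈ cylSets m ↔ cylIndep m 5 σ := by
  constructor
  · exact fun h => (Finset.mem_filter.1 h).2
  · intro h
    refine Finset.mem_filter.2 ⟨Finset.mem_powerset.2 fun v hv => ?_, h⟩
    exact Finset.mem_product.2 ⟨Finset.mem_Icc.2 (h.1 v hv), Finset.mem_univ _⟩

lemma indep5_row {m : ℕ} {σ : Finset (ℕ × ZMod 5)} (h : cylIndep m 5 σ) (i : ℕ) :
    indep5 (row i σ) := by
  intro c hc hc1
  have h1 : (i, c) ∈ σ := mem_row.1 hc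
  have h2 : (i, c + 1) ∈ σ := mem_row.1 hc1
  refine h.2 _ h1 _ h2 ⟨fun e => ?_, Or.inl ⟨rfl, Or.inl rfl⟩⟩
  have hc2 : c = c + 1 := congrArg Prod.snd e
  have : (1 : ZMod 5) = 0 := left_eq_add.mp hc2
  exact absurd this (by decide)

lemma Zcyl_eq_sum (m : ℕ) : Zcyl m 5 = ∑ σ ∈ cylSets m, (-1 : ℤ) ^ σ.card := by
  have h : {σ : Finset (ℕ × ZMod 5) | cylIndep m 5 σ} = ↑(cylSets m) := by
    ext σ; simp [mem_cylSets]
  rw [Zcyl, h, finsum_mem_coe_finset]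

lemma Zcyl_eq_G (m : ℕ) : Zcyl m 5 = ∑ t : Finset (ZMod 5), G m t := by
  rw [Zcyl_eq_sum]
  exact (Finset.sum_fiberwise (cylSets m) (row m) (fun σ => (-1 : ℤ) ^ σ.card)).symm

lemma cylSets_zero : cylSets 0 = {∅} := by
  ext σ
  rw [Finset.mem_singleton, mem_cylSets]
  constructor
  · intro h
    apply Finset.eq_empty_of_forall_notMem
    intro v hv
    have := h.1 v hv; omega
  · rintro rfl
    exact ⟨fun v hv => absurd hv (Finset.notMem_empty v),
      fun v hv => absurd hv (Finset.notMem_empty v)⟩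

lemma G_zero (t : Finset (ZMod 5)) : G 0 t = if t = ∅ then 1 else 0 := by
  rw [G, cylSets_zero, Finset.filter_singleton]
  have hr : row 0 (∅ : Finset (ℕ × ZMod 5)) = ∅ := rfl
  rw [hr]
  by_cases h : t = ∅
  · subst h; simp
  · rw [if_neg (fun e : (∅ : Finset (ZMod 5)) = t => h e.symm), if_neg h]
    simp

lemma G_succ (m : ℕ) (t : Finset (ZMod 5)) : G (m + 1) t = stepF (G m) t := by
  by_cases ht : indep5 t
  · -- Step A : rewrite the transfer sum as a sum over cylSets m
    have stepA : (∑ s : Finset (ZMod 5), if Disjoint s t then G m s else 0)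
        = ∑ σ' ∈ cylSets m, (if Disjoint (row m σ') t then (-1 : ℤ) ^ σ'.card else 0) := by
      rw [← Finset.sum_fiberwise (cylSets m) (row m)
        (fun σ' => if Disjoint (row m σ') t then (-1 : ℤ) ^ σ'.card else 0)]
      refine Finset.sum_congr rfl fun s _ => ?_
      by_cases hd : Disjoint s t
      · rw [if_pos hd, G]
        refine Finset.sum_congr rfl fun σ' hσ' => ?_
        rw [(Finset.mem_filter.1 hσ').2, if_pos hd]
      · rw [if_neg hd]
        refine (Finset.sum_eq_zero fun σ' hσ' => ?_).symm
        rw [(Finset.mem_filter.1 hσ').2, if_neg hd]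
    rw [stepF, if_pos ht, stepA, Finset.mul_sum]
    simp only [mul_ite, mul_zero]
    rw [← Finset.sum_filter, G]
    -- the bijection σ ↦ (lower part, top row)
    have key1 : ∀ σ ∈ (cylSets (m + 1)).filter (fun σ => row (m + 1) σ = t),
        σ.filter (fun v => v.1 ≤ m) ∈ (cylSets m).filter (fun σ' => Disjoint (row m σ') t) := by
      intro σ hσ
      obtain ⟨hσ1, hσ2⟩ := Finset.mem_filter.1 hσ
      have ci := mem_cylSets.1 hσ1
      refine Finset.mem_filter.2 ⟨mem_cylSets.2 ⟨?_, ?_⟩, ?_⟩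
      · intro v hv
        obtain ⟨hvσ, hvm⟩ := Finset.mem_filter.1 hv
        exact ⟨(ci.1 v hvσ).1, hvm⟩
      · intro v hv w hw
        exact ci.2 v (Finset.mem_filter.1 hv).1 w (Finset.mem_filter.1 hw).1
      · rw [Finset.disjoint_left]
        intro c hc hct
        have h1 : (m, c) ∈ σ := (Finset.mem_filter.1 (mem_row.1 hc)).1
        have h2 : (m + 1, c) ∈ σ := mem_row.1 (hσ2 ▸ hct)
        refine ci.2 _ h1 _ h2 ⟨fun e => ?_, Or.inr ⟨rfl, Or.inl rfl⟩⟩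
        have : m = m + 1 := congrArg Prod.fst e
        omega
    have himg : ∀ σ ∈ (cylSets (m + 1)).filter (fun σ => row (m + 1) σ = t),
        σ.filter (fun v => ¬ v.1 ≤ m) = t.image (fun c => (m + 1, c)) := by
      intro σ hσ
      obtain ⟨hσ1, hσ2⟩ := Finset.mem_filter.1 hσ
      have ci := mem_cylSets.1 hσ1
      ext v
      rw [Finset.mem_filter, Finset.mem_image]
      constructor
      · rintro ⟨hvσ, hvm⟩
        have hb := (ci.1 v hvσ).2
        have hv1 : v.1 = m + 1 := by omega
        refine ⟨v.2, ?_, ?_⟩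
        · rw [← hσ2]
          exact mem_row.2 (by rwa [← hv1, Prod.mk.eta])
        · rw [← hv1, Prod.mk.eta]
      · rintro ⟨c, hc, rfl⟩
        exact ⟨mem_row.1 (hσ2 ▸ hc), by omega⟩
    refine Finset.sum_nbij' (fun σ => σ.filter (fun v => v.1 ≤ m))
      (fun σ' => σ' ∪ t.image (fun c => (m + 1, c))) key1 ?_ ?_ ?_ ?_
    · -- hj
      intro σ' hσ'
      obtain ⟨hσ'1, hd⟩ := Finset.mem_filter.1 hσ'
      have ci := mem_cylSets.1 hσ'1
      have hmem : ∀ v, v ∈ σ' ∪ t.image (fun c => (m + 1, c)) ↔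
          v ∈ σ' ∨ ∃ c ∈ t, v = (m + 1, c) := by
        intro v
        rw [Finset.mem_union, Finset.mem_image]
        constructor
        · rintro (h | ⟨c, hc, rfl⟩)
          · exact Or.inl h
          · exact Or.inr ⟨c, hc, rfl⟩
        · rintro (h | ⟨c, hc, rfl⟩)
          · exact Or.inl h
          · exact Or.inr ⟨c, hc, rfl⟩
      refine Finset.mem_filter.2 ⟨mem_cylSets.2 ⟨?_, ?_⟩, ?_⟩
      · intro v hv
        rcases (hmem v).1 hv with h | ⟨c, hc, rfl⟩
        · have := ci.1 v h; omega
        · exact ⟨by simp, by simp⟩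
      · -- independence of the union
        have main : ∀ v ∈ σ', ∀ c ∈ t, ¬ cylAdj 5 v (m + 1, c) := by
          intro v hv c hc hadj
          obtain ⟨hne, hor⟩ := hadj
          have hb := ci.1 v hv
          rcases hor with ⟨h1, _⟩ | ⟨h1, h2 | h2⟩
          · simp only at h1; omega
          · -- v.1 + 1 = m + 1, so v.1 = m and v.2 = c ∈ row m σ' ∩ t
            simp only at h1 h2
            have hv1 : v.1 = m := by omega
            have hrow : c ∈ row m σ' := by
              refine mem_row.2 ?_
              have : v = (m, c) := Prod.ext hv1 h1
              rwa [← this]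
            exact (Finset.disjoint_left.1 hd) hrow hc
          · simp only at h2; omega
        intro v hv w hw hadj
        rcases (hmem v).1 hv with h1 | ⟨c1, hc1, rfl⟩ <;>
          rcases (hmem w).1 hw with h2 | ⟨c2, hc2, rfl⟩
        · exact ci.2 v h1 w h2 hadj
        · exact main v h1 c2 hc2 hadj
        · exact main w h2 c1 hc1 (cylAdj_symm hadj)
        · obtain ⟨hne, hor⟩ := hadj
          rcases hor with ⟨h1, h2 | h2⟩ | ⟨h1, h2 | h2⟩
          · simp only at h2
            rw [h2] at hc2
            exact ht c1 hc1 hc2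
          · simp only at h2
            rw [h2] at hc1
            exact ht c2 hc2 hc1
          · simp only at h2; omega
          · simp only at h2; omega
      · -- top row of the union is t
        ext c
        rw [mem_row, Finset.mem_union, Finset.mem_image]
        constructor
        · rintro (h | ⟨c', hc', he⟩)
          · exact absurd (ci.1 _ h).2 (by simp)
          · have : c' = c := congrArg Prod.snd he
            rwa [← this]
        · intro hc
          exact Or.inr ⟨c, hc, rfl⟩
    · -- left_inv
      intro σ hσ
      beta_reduce
      rw [← himg σ hσ, Finset.filter_union_filter_not_eq]
    · -- right_inv
      intro σ' hσ'
      beta_reduce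
      obtain ⟨hσ'1, hd⟩ := Finset.mem_filter.1 hσ'
      have ci := mem_cylSets.1 hσ'1
      rw [Finset.filter_union]
      have h1 : σ'.filter (fun v => v.1 ≤ m) = σ' :=
        Finset.filter_true_of_mem fun v hv => (ci.1 v hv).2
      have h2 : (t.image (fun c => (m + 1, c))).filter (fun v => v.1 ≤ m) = ∅ := by
        apply Finset.eq_empty_of_forall_notMem
        intro v hv
        obtain ⟨hvi, hvm⟩ := Finset.mem_filter.1 hv
        obtain ⟨c, _, rfl⟩ := Finset.mem_image.1 hvi
        simp at hvm
      rw [h1, h2, Finset.union_empty]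
    · -- weights
      intro σ hσ
      beta_reduce
      have hcard : σ.card = t.card + (σ.filter (fun v => v.1 ≤ m)).card := by
        have hsplit : σ.card = (σ.filter (fun v => v.1 ≤ m)).card
            + (σ.filter (fun v => ¬ v.1 ≤ m)).card :=
          (Finset.card_filter_add_card_filter_not _).symm
        have himg' := himg σ hσ
        have hinj : Function.Injective (fun c : ZMod 5 => ((m + 1 : ℕ), c)) := by
          intro a b e
          exact congrArg Prod.snd e
        have : (σ.filter (fun v => ¬ v.1 ≤ m)).card = t.card := by
          rw [himg', Finset.card_image_of_injective _ hinj]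
        omega
      rw [hcard, pow_add]
  · rw [stepF, if_neg ht, G]
    apply Finset.sum_eq_zero
    intro σ hσ
    obtain ⟨h1, h2⟩ := Finset.mem_filter.1 hσ
    exact ((ht (h2 ▸ indep5_row (mem_cylSets.1 h1) (m + 1)))).elim

lemma stepF_congr {v w : Finset (ZMod 5) → ℤ} (h : ∀ s, v s = w s) (t : Finset (ZMod 5)) :
    stepF v t = stepF w t := by
  unfold stepF
  simp only [h]

set_option maxHeartbeats 1000000 in
lemma step_g0 : ∀ t, stepF (fun u => if u = ∅ then (1 : ℤ) else 0) t = initF t := by decide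

set_option maxHeartbeats 1000000 in
lemma step_period : ∀ t, stepF (stepF initF) t = initF t := by decide

set_option maxHeartbeats 1000000 in
lemma sum_initF : ∑ t : Finset (ZMod 5), initF t = 1 := by decide

set_option maxHeartbeats 1000000 in
lemma sum_step_initF : ∑ t : Finset (ZMod 5), stepF initF t = 1 := by decide

lemma G_one : ∀ t, G 1 t = initF t := by
  intro t
  rw [show (1 : ℕ) = 0 + 1 from rfl, G_succ,
    stepF_congr (fun s => G_zero s) t]
  exact step_g0 t

lemma G_alt : ∀ k : ℕ, (∀ t, G (2 * k + 1) t = initF t) ∧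
    (∀ t, G (2 * k + 2) t = stepF initF t) := by
  intro k
  induction k with
  | zero =>
    refine ⟨G_one, fun t => ?_⟩
    rw [show 2 * 0 + 2 = 1 + 1 from rfl, G_succ]
    exact stepF_congr G_one t
  | succ n ih =>
    constructor
    · intro t
      rw [show 2 * (n + 1) + 1 = (2 * n + 2) + 1 by ring, G_succ,
        stepF_congr ih.2 t]
      exact step_period t
    · intro t
      have hfst : ∀ u, G (2 * (n + 1) + 1) u = initF u := by
        intro u
        rw [show 2 * (n + 1) + 1 = (2 * n + 2) + 1 by ring, G_succ,
          stepF_congr ih.2 u]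
        exact step_period u
      rw [show 2 * (n + 1) + 2 = (2 * (n + 1) + 1) + 1 by ring, G_succ]
      exact stepF_congr hfst t

/-- For every integer `m ≥ 1`, `Z(C_{m,5}) = 1`. -/
theorem Zcyl_five (m : ℕ) (hm : 1 ≤ m) : Zcyl m 5 = 1 := by
  obtain ⟨k, hk⟩ : ∃ k, m = 2 * k + 1 ∨ m = 2 * k + 2 := ⟨(m - 1) / 2, by omega⟩
  rw [Zcyl_eq_G]
  rcases hk with rfl | rfl
  · rw [Finset.sum_congr rfl fun t _ => (G_alt k).1 t]
    exact sum_initF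
  · rw [Finset.sum_congr rfl fun t _ => (G_alt k).2 t]
    exact sum_step_initF
end

section
/- Let m ≥ 1, n ≥ 2, and let σ be an independent set of C_{m,n} such that its equivalence class X_σ has more than one element and at least one interval of σ has odd length. Then Σ_{τ ∈ X_σ} (−1)^{|τ|} = 0. -/
/-- `π(σ)`: the set of columns `j ∈ ℤ/nℤ` such that `(1,j) ∈ σ`. -/
def piRow (n : ℕ) (σ : Finset (ℕ × ZMod n)) : Finset (ZMod n) :=
  (σ.filter fun v => v.1 = 1).image Prod.snd

/-- For a set `P ⊆ ℤ/nℤ` of columns, `cOffset n P j` is the least `r ≥ 1`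
with `j − r ∈ P` (and `0` if no such `r` exists, i.e. if `P = ∅`).
For `j` a position of an interval of `P` this is the offset `r` of `j` in its
interval (so `j` is an even position iff `cOffset n P j` is positive and even);
for `x ∈ P` it is the length of the interval ending at `x`, i.e. the cyclic gap
from the previous element of `P` to `x`. -/
noncomputable def cOffset (n : ℕ) (P : Finset (ZMod n)) (j : ZMod n) : ℕ :=
  sInf {r : ℕ | 0 < r ∧ j - (r : ZMod n) ∈ P}

/-- `π_e`: the elements of `P` sitting in even position of their interval. -/
noncomputable def piE (n : ℕ) (P : Finset (ZMod n)) : Finset (ZMod n) :=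
  P.filter fun x => 0 < cOffset n P x ∧ Even (cOffset n P x)

/-- `π_o`: the elements of `P` sitting in odd position of their interval. -/
noncomputable def piO (n : ℕ) (P : Finset (ZMod n)) : Finset (ZMod n) :=
  P.filter fun x => Odd (cOffset n P x)

/-- The column `j` is free in `σ`: `(1,j) ∉ σ` and `σ ∪ {(1,j)}` is independent. -/
def freeCol (m n : ℕ) (σ : Finset (ℕ × ZMod n)) (j : ZMod n) : Prop :=
  ((1 : ℕ), j) ∉ σ ∧ cylIndep m n (insert ((1 : ℕ), j) σ)

/-- The closure `σ̂` of `σ`: `σ` together with all `(1,j)` where `j` is a free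
even position of one of the intervals of `σ` (if `π(σ) = ∅` nothing is added,
since then `cOffset` vanishes identically). -/
def clo (m n : ℕ) (σ : Finset (ℕ × ZMod n)) : Set (ℕ × ZMod n) :=
  ↑σ ∪ {v | v.1 = 1 ∧ 0 < cOffset n (piRow n σ) v.2 ∧
    Even (cOffset n (piRow n σ) v.2) ∧ freeCol m n σ v.2}

/-- The equivalence class `X_σ` of `σ`: all independent sets with the same closure. -/
def Xclass (m n : ℕ) (σ : Finset (ℕ × ZMod n)) : Set (Finset (ℕ × ZMod n)) :=
  {τ | cylIndep m n τ ∧ clo m n τ = clo m n σ}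

set_option linter.unusedSectionVars false

section Offsets

variable {n : ℕ} [NeZero n]

lemma cOffset_le {P : Finset (ZMod n)} {j : ZMod n} {r : ℕ} (h0 : 0 < r)
    (h : j - (r : ZMod n) ∈ P) : cOffset n P j ≤ r :=
  Nat.sInf_le ⟨h0, h⟩

lemma cOffset_spec {P : Finset (ZMod n)} (hP : P.Nonempty) (j : ZMod n) :
    0 < cOffset n P j ∧ j - (cOffset n P j : ZMod n) ∈ P := by
  obtain ⟨x, hx⟩ := hP
  have hne : {r : ℕ | 0 < r ∧ j - (r : ZMod n) ∈ P}.Nonempty := by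
    by_cases h : x = j
    · exact ⟨n, Nat.pos_of_ne_zero (NeZero.ne n),
        by rw [ZMod.natCast_self, sub_zero, ← h]; exact hx⟩
    · refine ⟨(j - x).val, ZMod.val_pos.mpr (sub_ne_zero.mpr (Ne.symm h)), ?_⟩
      rw [ZMod.natCast_val, ZMod.cast_id, sub_sub_cancel]
      exact hx
  exact ⟨(Nat.sInf_mem hne).1, (Nat.sInf_mem hne).2⟩

lemma cOffset_min {P : Finset (ZMod n)} {j : ZMod n} {r : ℕ} (h0 : 0 < r)
    (hlt : r < cOffset n P j) : j - (r : ZMod n) ∉ P :=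
  fun hm => absurd (cOffset_le h0 hm) (not_le.mpr hlt)

lemma nonempty_of_cOffset_pos {P : Finset (ZMod n)} {j : ZMod n}
    (h : 0 < cOffset n P j) : P.Nonempty := by
  rcases P.eq_empty_or_nonempty with rfl | h'
  · exfalso
    have he : {r : ℕ | 0 < r ∧ j - (r : ZMod n) ∈ (∅ : Finset (ZMod n))} = ∅ := by simp
    rw [cOffset, he, Nat.sInf_empty] at h
    exact lt_irrefl 0 h
  · exact h'

lemma cOffset_step {P P' : Finset (ZMod n)} (hP : P.Nonempty) (hsub : P ⊆ P') (j : ZMod n) :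
    cOffset n P j = cOffset n P' j ∨
    (j - (cOffset n P' j : ZMod n) ∉ P ∧
      cOffset n P j = cOffset n P' j + cOffset n P (j - (cOffset n P' j : ZMod n))) := by
  have hP' : P'.Nonempty := hP.mono hsub
  obtain ⟨hrpos, hq⟩ := cOffset_spec hP' j
  set r := cOffset n P' j with hr
  set q := j - (r : ZMod n) with hqdef
  by_cases hqP : q ∈ P
  · left
    refine le_antisymm (cOffset_le hrpos hqP) ?_
    by_contra hlt
    push_neg at hlt
    obtain ⟨hpos2, hmem2⟩ := cOffset_spec hP j
    exact cOffset_min hpos2 hlt (hsub hmem2)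
  · right
    refine ⟨hqP, ?_⟩
    obtain ⟨hgpos, hg⟩ := cOffset_spec hP q
    set g := cOffset n P q with hgdef
    apply le_antisymm
    · apply cOffset_le (by omega)
      have : j - ((r + g : ℕ) : ZMod n) = q - (g : ZMod n) := by
        push_cast; rw [hqdef]; ring
      rw [this]; exact hg
    · obtain ⟨hspos, hsmem⟩ := cOffset_spec hP j
      set s := cOffset n P j with hs
      by_contra h
      push_neg at h
      rcases lt_trichotomy s r with h1 | h1 | h1
      · exact cOffset_min hspos h1 (hsub hsmem)
      · exact hqP (by rw [hqdef, ← h1]; exact hsmem)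
      · have he : q - ((s - r : ℕ) : ZMod n) = j - (s : ZMod n) := by
          rw [Nat.cast_sub h1.le, hqdef]; ring
        exact cOffset_min (by omega) (by omega) (he ▸ hsmem)

lemma cOffset_even_iff {P P' : Finset (ZMod n)} (hP : P.Nonempty) (hsub : P ⊆ P')
    (hev : ∀ a ∈ P', a ∉ P → Even (cOffset n P a)) (j : ZMod n) :
    Even (cOffset n P j) ↔ Even (cOffset n P' j) := by
  rcases cOffset_step hP hsub j with h | ⟨hq, h⟩
  · rw [h]
  · have hqP' : j - (cOffset n P' j : ZMod n) ∈ P' := (cOffset_spec (hP.mono hsub) j).2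
    have hgev := hev _ hqP' hq
    rw [h, Nat.even_add]
    tauto

lemma cOffset_succ_mem {P : Finset (ZMod n)} {a : ZMod n} (ha : a ∈ P) :
    cOffset n P (a + 1) = 1 := by
  refine le_antisymm (cOffset_le one_pos ?_) (cOffset_spec ⟨a, ha⟩ _).1
  rw [Nat.cast_one, add_sub_cancel_right]; exact ha

lemma cOffset_succ_notMem {P : Finset (ZMod n)} {a : ZMod n} (hP : P.Nonempty) (ha : a ∉ P) :
    cOffset n P (a + 1) = cOffset n P a + 1 := by
  obtain ⟨hg, hmem⟩ := cOffset_spec hP a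
  apply le_antisymm
  · apply cOffset_le (by omega)
    have : (a + 1) - ((cOffset n P a + 1 : ℕ) : ZMod n) = a - (cOffset n P a : ZMod n) := by
      push_cast; ring
    rw [this]; exact hmem
  · obtain ⟨hs, hsm⟩ := cOffset_spec hP (a + 1)
    set s := cOffset n P (a + 1) with hsdef
    by_contra h
    push_neg at h
    rcases eq_or_lt_of_le (show 1 ≤ s from hs) with h1 | h1
    · rw [← h1, Nat.cast_one, add_sub_cancel_right] at hsm
      exact ha hsm
    · have he : (a + 1) - (s : ZMod n) = a - ((s - 1 : ℕ) : ZMod n) := by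
        rw [Nat.cast_sub (by omega)]; push_cast; ring
      exact cOffset_min (by omega) (by omega) (he ▸ hsm)

lemma cOffset_erase {P : Finset (ZMod n)} {j y : ZMod n} (hj : j ∈ P) (hy : y ∈ P)
    (hyj : y ≠ j) : cOffset n (P.erase j) j = cOffset n P j := by
  have hP : P.Nonempty := ⟨j, hj⟩
  obtain ⟨hg, hmem⟩ := cOffset_spec hP j
  set g := cOffset n P j with hgdef
  have hval : 0 < (j - y).val := ZMod.val_pos.mpr (sub_ne_zero.mpr (Ne.symm hyj))
  have hgle : g ≤ (j - y).val := by
    apply cOffset_le hval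
    rw [ZMod.natCast_val, ZMod.cast_id, sub_sub_cancel]
    exact hy
  have hglt : g < n := lt_of_le_of_lt hgle (ZMod.val_lt _)
  have hne : j - (g : ZMod n) ≠ j := by
    intro h
    have h0 : (g : ZMod n) = 0 := sub_eq_self.mp h
    have := (ZMod.natCast_eq_zero_iff g n).mp h0
    have := Nat.le_of_dvd hg this
    omega
  apply le_antisymm
  · exact cOffset_le hg (Finset.mem_erase.mpr ⟨hne, hmem⟩)
  · obtain ⟨hs, hsm⟩ := cOffset_spec ⟨y, Finset.mem_erase.mpr ⟨hyj, hy⟩⟩ j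
    exact cOffset_le hs (Finset.mem_erase.mp hsm).2

end Offsets

section Graph

variable {m n : ℕ}

lemma indep_mono {τ σ : Finset (ℕ × ZMod n)} (h : τ ⊆ σ) (hσ : cylIndep m n σ) :
    cylIndep m n τ :=
  ⟨fun v hv => hσ.1 v (h hv), fun v hv w hw => hσ.2 v (h hv) w (h hw)⟩

lemma mem_piRow {τ : Finset (ℕ × ZMod n)} {j : ZMod n} :
    j ∈ piRow n τ ↔ ((1 : ℕ), j) ∈ τ := by
  constructor
  · intro h
    simp only [piRow, Finset.mem_image, Finset.mem_filter] at h
    obtain ⟨⟨a, b⟩, ⟨hm, ha⟩, hb⟩ := h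
    simp only at ha hb
    subst ha; subst hb; exact hm
  · intro h
    simp only [piRow, Finset.mem_image, Finset.mem_filter]
    exact ⟨((1 : ℕ), j), ⟨h, rfl⟩, rfl⟩

lemma piRow_insert {τ : Finset (ℕ × ZMod n)} {j : ZMod n} :
    piRow n (insert ((1 : ℕ), j) τ) = insert j (piRow n τ) := by
  ext p
  simp only [mem_piRow, Finset.mem_insert, Prod.ext_iff, mem_piRow]
  simp

lemma piRow_erase {τ : Finset (ℕ × ZMod n)} {j : ZMod n} :
    piRow n (Finset.erase τ ((1 : ℕ), j)) = (piRow n τ).erase j := by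
  ext p
  simp only [mem_piRow, Finset.mem_erase, Prod.ext_iff, mem_piRow]
  simp

lemma not_adj_row1 {p q : ZMod n} (h1 : q ≠ p + 1) (h2 : p ≠ q + 1) :
    ¬ cylAdj n ((1 : ℕ), p) ((1 : ℕ), q) := by
  rintro ⟨hne, h⟩
  rcases h with ⟨-, h | h⟩ | ⟨-, h | h⟩
  · exact h1 h
  · exact h2 h
  · simp at h
  · simp at h

lemma indep_insert_insert {τ : Finset (ℕ × ZMod n)} {p j : ZMod n}
    (hp : cylIndep m n (insert ((1 : ℕ), p) τ))
    (hj : cylIndep m n (insert ((1 : ℕ), j) τ))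
    (hadj1 : ¬ cylAdj n ((1 : ℕ), p) ((1 : ℕ), j))
    (hadj2 : ¬ cylAdj n ((1 : ℕ), j) ((1 : ℕ), p)) :
    cylIndep m n (insert ((1 : ℕ), p) (insert ((1 : ℕ), j) τ)) := by
  constructor
  · intro v hv
    rcases Finset.mem_insert.mp hv with rfl | hv
    · exact hp.1 _ (Finset.mem_insert_self _ _)
    · exact hj.1 _ hv
  · intro v hv w hw
    rcases Finset.mem_insert.mp hv with rfl | hv <;>
      rcases Finset.mem_insert.mp hw with rfl | hw
    · exact fun h => h.1 rfl
    · rcases Finset.mem_insert.mp hw with rfl | hw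
      · exact hadj1
      · exact hp.2 _ (Finset.mem_insert_self _ _) _ (Finset.mem_insert_of_mem hw)
    · rcases Finset.mem_insert.mp hv with rfl | hv
      · exact hadj2
      · exact hp.2 _ (Finset.mem_insert_of_mem hv) _ (Finset.mem_insert_self _ _)
    · exact hj.2 _ hv _ hw

end Graph


section Clo

variable {m n : ℕ} [NeZero n]

lemma clo_insert (hm : 1 ≤ m) {τ : Finset (ℕ × ZMod n)} {j : ZMod n}
    (hτ : cylIndep m n τ)
    (hpos : 0 < cOffset n (piRow n τ) j) (hev : Even (cOffset n (piRow n τ) j))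
    (hfree : freeCol m n τ j) :
    clo m n (insert ((1 : ℕ), j) τ) = clo m n τ := by
  obtain ⟨hjτ, hins⟩ := hfree
  have hP : (piRow n τ).Nonempty := nonempty_of_cOffset_pos hpos
  have hjP : j ∉ piRow n τ := fun h => hjτ (mem_piRow.mp h)
  have hsub : piRow n τ ⊆ insert j (piRow n τ) := Finset.subset_insert _ _
  have hev' : ∀ a ∈ insert j (piRow n τ), a ∉ piRow n τ →
      Even (cOffset n (piRow n τ) a) := by
    intro a ha hna
    rcases Finset.mem_insert.mp ha with rfl | h
    · exact hev
    · exact absurd h hna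
  have hparity : ∀ p, Even (cOffset n (insert j (piRow n τ)) p) ↔
      Even (cOffset n (piRow n τ) p) :=
    fun p => (cOffset_even_iff hP hsub hev' p).symm
  have hposP : ∀ p, 0 < cOffset n (piRow n τ) p := fun p => (cOffset_spec hP p).1
  have hposP' : ∀ p, 0 < cOffset n (insert j (piRow n τ)) p :=
    fun p => (cOffset_spec (hP.mono hsub) p).1
  have hfree_iff : ∀ p : ZMod n, p ≠ j → ((1 : ℕ), p) ∉ τ →
      Even (cOffset n (piRow n τ) p) →
      (freeCol m n τ p ↔ freeCol m n (insert ((1 : ℕ), j) τ) p) := by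
    intro p hpj hpτ hpe
    have hpP : p ∉ piRow n τ := fun h => hpτ (mem_piRow.mp h)
    constructor
    · rintro ⟨h1, h2⟩
      have hne1 : p ≠ j + 1 := by
        intro h
        rw [h, cOffset_succ_notMem hP hjP] at hpe
        exact (Nat.even_add_one.mp hpe) hev
      have hne2 : j ≠ p + 1 := by
        intro h
        rw [h, cOffset_succ_notMem hP hpP] at hev
        exact (Nat.even_add_one.mp hev) hpe
      refine ⟨?_, ?_⟩
      · intro hmem
        rcases Finset.mem_insert.mp hmem with heq | hmem'
        · exact hpj (congrArg Prod.snd heq)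
        · exact hpτ hmem'
      · exact indep_insert_insert h2 hins (not_adj_row1 hne2 hne1)
          (not_adj_row1 hne1 hne2)
    · rintro ⟨h1, h2⟩
      exact ⟨hpτ, indep_mono
        (Finset.insert_subset_insert _ (Finset.subset_insert _ _)) h2⟩
  ext v
  obtain ⟨a, p⟩ := v
  by_cases hv1 : a = 1
  · subst hv1
    by_cases hpj : p = j
    · subst hpj
      apply iff_of_true
      · exact Or.inl (Finset.mem_coe.mpr (Finset.mem_insert_self _ _))
      · exact Or.inr ⟨rfl, hpos, hev, hjτ, hins⟩
    · by_cases hpτ : ((1 : ℕ), p) ∈ τ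
      · apply iff_of_true
        · exact Or.inl (Finset.mem_coe.mpr (Finset.mem_insert_of_mem hpτ))
        · exact Or.inl (Finset.mem_coe.mpr hpτ)
      · have hpins : ((1 : ℕ), p) ∉ insert ((1 : ℕ), j) τ := by
          intro hmem
          rcases Finset.mem_insert.mp hmem with heq | hmem'
          · exact hpj (congrArg Prod.snd heq)
          · exact hpτ hmem'
        constructor
        · rintro (h | ⟨-, h2, h3, h4⟩)
          · exact absurd (Finset.mem_coe.mp h) hpins
          · rw [piRow_insert] at h3
            have h3' : Even (cOffset n (piRow n τ) p) := (hparity p).mp h3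
            exact Or.inr ⟨rfl, hposP p, h3',
              (hfree_iff p hpj hpτ h3').mpr h4⟩
        · rintro (h | ⟨-, h2, h3, h4⟩)
          · exact absurd (Finset.mem_coe.mp h) hpτ
          · refine Or.inr ⟨rfl, ?_, ?_, ?_⟩
            · rw [piRow_insert]; exact hposP' p
            · rw [piRow_insert]; exact (hparity p).mpr h3
            · exact (hfree_iff p hpj hpτ h3).mp h4
  · constructor
    · rintro (h | ⟨h1, -⟩)
      · rcases Finset.mem_insert.mp (Finset.mem_coe.mp h) with heq | hmem'
        · exact absurd (congrArg Prod.fst heq) hv1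
        · exact Or.inl (Finset.mem_coe.mpr hmem')
      · exact absurd h1 hv1
    · rintro (h | ⟨h1, -⟩)
      · exact Or.inl (Finset.mem_coe.mpr
          (Finset.mem_insert_of_mem (Finset.mem_coe.mp h)))
      · exact absurd h1 hv1

lemma clo_erase (hm : 1 ≤ m) {τ : Finset (ℕ × ZMod n)} {j : ZMod n}
    (hτ : cylIndep m n τ) (hjτ : ((1 : ℕ), j) ∈ τ)
    (hev : Even (cOffset n (piRow n τ) j))
    (hodd : ∃ y ∈ piRow n τ, Odd (cOffset n (piRow n τ) y)) :
    clo m n (Finset.erase τ ((1 : ℕ), j)) = clo m n τ := by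
  obtain ⟨y, hy, hyodd⟩ := hodd
  have hyj : y ≠ j := by
    rintro rfl
    exact (Nat.not_odd_iff_even.mpr hev) hyodd
  have hins : insert ((1 : ℕ), j) (Finset.erase τ ((1 : ℕ), j)) = τ :=
    Finset.insert_erase hjτ
  have hjP : j ∈ piRow n τ := mem_piRow.mpr hjτ
  have hoff : cOffset n (piRow n (Finset.erase τ ((1 : ℕ), j))) j
      = cOffset n (piRow n τ) j := by
    rw [piRow_erase]
    exact cOffset_erase hjP hy hyj
  have h := clo_insert hm (m := m) (τ := Finset.erase τ ((1 : ℕ), j)) (j := j)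
    (indep_mono (Finset.erase_subset _ _) hτ)
    (by rw [hoff]; exact (cOffset_spec ⟨j, hjP⟩ j).1)
    (by rw [hoff]; exact hev)
    ⟨Finset.notMem_erase _ _, by rw [hins]; exact hτ⟩
  rw [hins] at h
  exact h.symm

end Clo


open Classical in
/-- The columns of the closure of `τ` (in row 1). -/
noncomputable def Qf (m n : ℕ) [NeZero n] (τ : Finset (ℕ × ZMod n)) : Finset (ZMod n) :=
  Finset.univ.filter fun p => ((1 : ℕ), p) ∈ clo m n τ

lemma mem_Qf {m n : ℕ} [NeZero n] {τ : Finset (ℕ × ZMod n)} {p : ZMod n} :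
    p ∈ Qf m n τ ↔ ((1 : ℕ), p) ∈ clo m n τ := by
  simp [Qf]

lemma piRow_subset_Qf {m n : ℕ} [NeZero n] {τ : Finset (ℕ × ZMod n)} :
    piRow n τ ⊆ Qf m n τ := fun p hp =>
  mem_Qf.mpr (Or.inl (Finset.mem_coe.mpr (mem_piRow.mp hp)))

lemma Qf_even {m n : ℕ} [NeZero n] {τ : Finset (ℕ × ZMod n)} :
    ∀ a ∈ Qf m n τ, a ∉ piRow n τ → Even (cOffset n (piRow n τ) a) := by
  intro a ha hna
  rcases mem_Qf.mp ha with h | h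
  · exact absurd (mem_piRow.mpr (Finset.mem_coe.mp h)) hna
  · exact h.2.2.1


/-- If the equivalence class `X_σ` of an independent set `σ` of
`C_{m,n}` has more than one element and at least one interval of `σ` has odd
length, then `Σ_{τ ∈ X_σ} (−1)^{|τ|} = 0`. -/
theorem class_sum_odd_interval (m n : ℕ) (hm : 1 ≤ m) (hn : 2 ≤ n)
    (σ : Finset (ℕ × ZMod n)) (hσ : cylIndep m n σ)
    (hbig : (Xclass m n σ).Nontrivial)
    (hodd : ∃ x ∈ piRow n σ, Odd (cOffset n (piRow n σ) x)) :
    ∑ᶠ τ ∈ Xclass m n σ, (-1 : ℤ) ^ τ.card = 0 := by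
  haveI : NeZero n := ⟨by omega⟩
  classical
  obtain ⟨x, hxσ, hxodd⟩ := hodd
  have hσS : σ ∈ Xclass m n σ := ⟨hσ, rfl⟩
  set Q := Qf m n σ with hQdef
  have hσne : (piRow n σ).Nonempty := ⟨x, hxσ⟩
  have hQoddx : ¬ Even (cOffset n Q x) := by
    have h := cOffset_even_iff (P' := Qf m n σ) hσne piRow_subset_Qf Qf_even x
    exact fun he => (Nat.not_odd_iff_even.mpr (h.mpr he)) hxodd
  have memFacts : ∀ τ ∈ Xclass m n σ, x ∈ piRow n τ ∧
      (∀ p, Even (cOffset n (piRow n τ) p) ↔ Even (cOffset n Q p)) := by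
    intro τ hτS
    have hclo : clo m n τ = clo m n σ := hτS.2
    have h1x : ((1 : ℕ), x) ∈ clo m n τ := by
      rw [hclo]; exact Or.inl (Finset.mem_coe.mpr (mem_piRow.mp hxσ))
    have hπne : (piRow n τ).Nonempty := by
      rcases h1x with h | h
      · exact ⟨x, mem_piRow.mpr (Finset.mem_coe.mp h)⟩
      · exact nonempty_of_cOffset_pos h.2.1
    have hQτ : Qf m n τ = Q := by
      ext p; rw [hQdef, mem_Qf, mem_Qf, hclo]
    have htrans : ∀ p, Even (cOffset n (piRow n τ) p) ↔ Even (cOffset n Q p) := by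
      intro p
      rw [← hQτ]
      exact cOffset_even_iff hπne piRow_subset_Qf Qf_even p
    refine ⟨?_, htrans⟩
    rcases h1x with h | h
    · exact mem_piRow.mpr (Finset.mem_coe.mp h)
    · exact absurd ((htrans x).mp h.2.2.1) hQoddx
  have aux : ∀ τa ∈ Xclass m n σ, ∀ v : ℕ × ZMod n, v ∈ clo m n σ → v ∉ τa →
      ((1 : ℕ), v.2) ∈ clo m n σ ∧ Even (cOffset n Q v.2) := by
    intro τa hτa v hv hvτa
    have hv' : v ∈ clo m n τa := by rw [hτa.2]; exact hv
    rcases hv' with h | h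
    · exact absurd (Finset.mem_coe.mp h) hvτa
    · obtain ⟨h1, h2, h3, h4⟩ := h
      have hveq : ((1 : ℕ), v.2) = v := Prod.ext h1.symm rfl
      exact ⟨by rw [hveq]; exact hv, ((memFacts τa hτa).2 v.2).mp h3⟩
  obtain ⟨τ₁, hτ₁, τ₂, hτ₂, hne12⟩ := hbig
  have hj0 : ∃ j₀ : ZMod n, ((1 : ℕ), j₀) ∈ clo m n σ ∧ Even (cOffset n Q j₀) := by
    have hns : ¬ (τ₁ ⊆ τ₂ ∧ τ₂ ⊆ τ₁) :=
      fun h => hne12 (Finset.Subset.antisymm h.1 h.2)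
    rw [not_and_or] at hns
    rcases hns with h | h
    · obtain ⟨v, hv1, hv2⟩ := Finset.not_subset.mp h
      obtain ⟨ha, hb⟩ := aux τ₂ hτ₂ v
        (by rw [← hτ₁.2]; exact Or.inl (Finset.mem_coe.mpr hv1)) hv2
      exact ⟨v.2, ha, hb⟩
    · obtain ⟨v, hv1, hv2⟩ := Finset.not_subset.mp h
      obtain ⟨ha, hb⟩ := aux τ₁ hτ₁ v
        (by rw [← hτ₂.2]; exact Or.inl (Finset.mem_coe.mpr hv1)) hv2
      exact ⟨v.2, ha, hb⟩
  obtain ⟨j₀, hj₀clo, hj₀ev⟩ := hj0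
  have hfin : (Xclass m n σ).Finite := by
    apply Set.Finite.subset
      (Finset.finite_toSet ((Finset.range (m + 1)) ×ˢ (Finset.univ : Finset (ZMod n))).powerset)
    intro τ hτ
    rw [Finset.mem_coe, Finset.mem_powerset]
    intro v hv
    rw [Finset.mem_product]
    exact ⟨Finset.mem_range.mpr (by have := hτ.1.1 v hv; omega), Finset.mem_univ _⟩
  have hTmem : ∀ τ ∈ Xclass m n σ,
      (if ((1 : ℕ), j₀) ∈ τ then Finset.erase τ ((1 : ℕ), j₀)
        else insert ((1 : ℕ), j₀) τ) ∈ Xclass m n σ := by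
    intro τ hτS
    obtain ⟨hxτ, htrans⟩ := memFacts τ hτS
    by_cases hj : ((1 : ℕ), j₀) ∈ τ
    · rw [if_pos hj]
      have hevτ : Even (cOffset n (piRow n τ) j₀) := (htrans j₀).mpr hj₀ev
      have hoddτ : Odd (cOffset n (piRow n τ) x) := by
        rw [← Nat.not_even_iff_odd]
        exact fun h => hQoddx ((htrans x).mp h)
      refine ⟨indep_mono (Finset.erase_subset _ _) hτS.1, ?_⟩
      rw [clo_erase hm hτS.1 hj hevτ ⟨x, hxτ, hoddτ⟩, hτS.2]
    · rw [if_neg hj]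
      have h1 : ((1 : ℕ), j₀) ∈ clo m n τ := by rw [hτS.2]; exact hj₀clo
      rcases h1 with h | h
      · exact absurd (Finset.mem_coe.mp h) hj
      · obtain ⟨-, h2, h3, h4⟩ := h
        refine ⟨h4.2, ?_⟩
        rw [clo_insert hm hτS.1 h2 h3 h4, hτS.2]
  rw [← hfin.coe_toFinset, finsum_mem_coe_finset]
  refine Finset.sum_involution
    (fun τ _ => if ((1 : ℕ), j₀) ∈ τ then Finset.erase τ ((1 : ℕ), j₀)
      else insert ((1 : ℕ), j₀) τ) ?_ ?_
    (fun τ hτ => (hfin.mem_toFinset).mpr (hTmem τ ((hfin.mem_toFinset).mp hτ))) ?_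
  · intro τ hτ
    by_cases hj : ((1 : ℕ), j₀) ∈ τ
    · simp only [if_pos hj, Finset.card_erase_of_mem hj]
      obtain ⟨c, hc⟩ : ∃ c, τ.card = c + 1 :=
        ⟨τ.card - 1, (Nat.succ_pred_eq_of_pos (Finset.card_pos.mpr ⟨_, hj⟩)).symm⟩
      rw [hc]
      simp [pow_succ]
    · simp only [if_neg hj, Finset.card_insert_of_notMem hj, pow_succ]
      ring
  · intro τ hτ hne0
    by_cases hj : ((1 : ℕ), j₀) ∈ τ
    · simp only [if_pos hj]
      exact Finset.erase_ne_self.mpr hj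
    · simp only [if_neg hj]
      intro heq
      exact hj (heq ▸ Finset.mem_insert_self _ _)
  · intro τ hτ
    by_cases hj : ((1 : ℕ), j₀) ∈ τ
    · simp only [if_pos hj, if_neg (Finset.notMem_erase _ _)]
      exact Finset.insert_erase hj
    · simp only [if_neg hj, if_pos (Finset.mem_insert_self _ _)]
      exact Finset.erase_insert hj
end
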